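/- With probability at least 1 − δ over the draw of the i.i.d. training sample Z^n, every classifier h in the countable class ℋ satisfies |R_FP(h) − R̂_FP(h)| ≤ φ_FP(h, δ); likewise, with probability at least 1 − δ, every h ∈ ℋ satisfies |R_FN(h) − R̂_FN(h)| ≤ φ_FN(h, δ). These hold for every n ≥ 1, every 0 < δ < 1, and every underlying distribution P. -/

import Mathlib

open MeasureTheory ENNReal

/-- Symmetric deviation between two extended nonnegative reals. -/
noncomputable def edistE (a b : ℝ≥0∞) : ℝ≥0∞ := (a - b) ⊔ (b - a)

/-- The false positive rate `R_FP(h) = P(h(X) = 1 | Y = 0)`. -/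
noncomputable def RFP {𝓧 : Type*} [MeasurableSpace 𝓧] (P : Measure (𝓧 × Bool))
    (h : 𝓧 → Bool) : ℝ≥0∞ :=
  P {z : 𝓧 × Bool | h z.1 = true ∧ z.2 = false} / P {z : 𝓧 × Bool | z.2 = false}

/-- The false negative rate `R_FN(h) = P(h(X) = 0 | Y = 1)`. -/
noncomputable def RFN {𝓧 : Type*} [MeasurableSpace 𝓧] (P : Measure (𝓧 × Bool))
    (h : 𝓧 → Bool) : ℝ≥0∞ :=
  P {z : 𝓧 × Bool | h z.1 = false ∧ z.2 = true} / P {z : 𝓧 × Bool | z.2 = true}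

/-- The number of negative training examples `n₀`. -/
def nneg {𝓧 : Type*} {n : ℕ} (ω : Fin n → 𝓧 × Bool) : ℕ :=
  (Finset.univ.filter fun i => (ω i).2 = false).card

/-- The number of positive training examples `n₁`. -/
def npos {𝓧 : Type*} {n : ℕ} (ω : Fin n → 𝓧 × Bool) : ℕ :=
  (Finset.univ.filter fun i => (ω i).2 = true).card

/-- The empirical false positive rate, equal to `0` when `n₀ = 0`. -/
noncomputable def RhatFP {𝓧 : Type*} {n : ℕ} (h : 𝓧 → Bool) (ω : Fin n → 𝓧 × Bool) : ℝ≥0∞ :=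
  if 0 < nneg ω then
    ((Finset.univ.filter fun i => (ω i).2 = false ∧ h (ω i).1 = true).card : ℝ≥0∞)
      / (nneg ω : ℝ≥0∞)
  else 0

/-- The empirical false negative rate, equal to `0` when `n₁ = 0`. -/
noncomputable def RhatFN {𝓧 : Type*} {n : ℕ} (h : 𝓧 → Bool) (ω : Fin n → 𝓧 × Bool) : ℝ≥0∞ :=
  if 0 < npos ω then
    ((Finset.univ.filter fun i => (ω i).2 = true ∧ h (ω i).1 = false).card : ℝ≥0∞)
      / (npos ω : ℝ≥0∞)
  else 0

/-- The penalty `√((⟦h⟧ log 2 + log(2/δ)) / (2 m))`, equal to `1` when `m = 0`. -/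
noncomputable def penNP (c δ : ℝ) (m : ℕ) : ℝ≥0∞ :=
  if 0 < m then ENNReal.ofReal (Real.sqrt ((c * Real.log 2 + Real.log (2 / δ)) / (2 * m)))
  else 1


/-!
Conditionally on the labels, the examples with label `0` are i.i.d. draws from `P( · | Y = 0)`,
so for a fixed classifier `h` Hoeffding's inequality bounds the probability that the empirical
false positive rate misses `R_FP(h)` by more than `φ_FP(h, δ)` by
`2 exp(-(⟦h⟧ log 2 + log (2/δ))) = δ 2^(-⟦h⟧)`. The radius `φ_FP` is chosen so that this bound
does not depend on `n₀`, so it survives averaging over the labels. A union bound over `ℋ`,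
weighted by Kraft's inequality, gives the uniform statement; false negatives are symmetric.
-/

open ProbabilityTheory Real Finset
open scoped NNReal

section Hoeffding

variable {Ω ι : Type*} [MeasurableSpace Ω]

lemma measure_abs_sum_ge_le_of_iIndepFun {μ : Measure Ω} {X : ι → Ω → ℝ}
    (h_indep : iIndepFun X μ) {c : ι → ℝ≥0} {s : Finset ι}
    (h_subG : ∀ i ∈ s, HasSubgaussianMGF (X i) (c i) μ) {ε : ℝ} (hε : 0 ≤ ε) :
    μ.real {ω | ε ≤ |∑ i ∈ s, X i ω|} ≤ 2 * exp (-ε ^ 2 / (2 * ∑ i ∈ s, c i)) := by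
  have := h_indep.isProbabilityMeasure
  have h_indep_neg : iIndepFun (fun i ω ↦ -X i ω) μ :=
    h_indep.comp (fun _ ↦ Neg.neg) fun _ ↦ measurable_neg
  calc μ.real {ω | ε ≤ |∑ i ∈ s, X i ω|}
      ≤ μ.real ({ω | ε ≤ ∑ i ∈ s, X i ω} ∪ {ω | ε ≤ ∑ i ∈ s, -X i ω}) := by
        refine measureReal_mono fun ω hω ↦ ?_
        simp only [Set.mem_ofPred_eq, Set.mem_union, Finset.sum_neg_distrib] at hω ⊢
        rcases le_abs'.mp hω with h | h
        · exact .inr (by linarith)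
        · exact .inl h
    _ ≤ μ.real {ω | ε ≤ ∑ i ∈ s, X i ω} + μ.real {ω | ε ≤ ∑ i ∈ s, -X i ω} :=
        measureReal_union_le _ _
    _ ≤ 2 * exp (-ε ^ 2 / (2 * ∑ i ∈ s, c i)) := by
        rw [two_mul]
        exact add_le_add (HasSubgaussianMGF.measure_sum_ge_le_of_iIndepFun h_indep h_subG hε)
          (HasSubgaussianMGF.measure_sum_ge_le_of_iIndepFun h_indep_neg
            (fun i hi ↦ (h_subG i hi).neg) hε)

lemma hasSubgaussianMGF_indicator_sub_measureReal (ν : Measure Ω) [IsProbabilityMeasure ν]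
    {A : Set Ω} (hA : MeasurableSet A) :
    HasSubgaussianMGF (fun x ↦ A.indicator 1 x - ν.real A) (1 / 4) ν := by
  have h := hasSubgaussianMGF_of_mem_Icc (μ := ν) (X := A.indicator 1) (a := 0) (b := 1)
    (measurable_const.indicator hA).aemeasurable
    (ae_of_all _ fun x ↦ by by_cases hx : x ∈ A <;> simp [hx])
  rw [integral_indicator_one hA] at h
  convert h
  ext
  norm_num

open scoped Classical in
lemma measure_pi_lt_abs_sub_card_filter_div_le [Fintype ι] (ν : ι → Measure Ω)
    [∀ i, IsProbabilityMeasure (ν i)] {A : Set Ω} (hA : MeasurableSet A) {s : Finset ι}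
    (hs : s.Nonempty) {p : ℝ} (hp : ∀ i ∈ s, (ν i).real A = p) {t : ℝ} (ht : 0 ≤ t) :
    Measure.pi ν {ω | t < |p - #{i ∈ s | ω i ∈ A} / #s|}
      ≤ ENNReal.ofReal (2 * exp (-2 * #s * t ^ 2)) := by
  set X : ι → Ω → ℝ := fun i x ↦ A.indicator 1 x - p
  have h_indep : iIndepFun (fun i ω ↦ X i (ω i)) (Measure.pi ν) :=
    iIndepFun_pi fun i ↦ ((measurable_const.indicator hA).sub_const p).aemeasurable
  have h_subG (i : ι) (hi : i ∈ s) :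
      HasSubgaussianMGF (fun ω ↦ X i (ω i)) (1 / 4) (Measure.pi ν) := by
    refine HasSubgaussianMGF.of_map (X := X i) (Y := fun ω : ι → Ω ↦ ω i)
      (measurable_pi_apply i).aemeasurable ?_
    rw [(measurePreserving_eval ν i).map_eq]
    simpa only [X, hp i hi] using hasSubgaussianMGF_indicator_sub_measureReal (ν i) hA
  have hk : (0 : ℝ) < #s := by exact_mod_cast hs.card_pos
  have h_sum (ω : ι → Ω) :
      ∑ i ∈ s, X i (ω i) = #s * -(p - #{i ∈ s | ω i ∈ A} / #s) := by
    simp only [X, Set.indicator_apply, Pi.one_apply, sum_sub_distrib, sum_boole, sum_const,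
      nsmul_eq_mul, neg_sub]
    field_simp
  have h_event : {ω : ι → Ω | t < |p - #{i ∈ s | ω i ∈ A} / #s|}
      ⊆ {ω | #s * t ≤ |∑ i ∈ s, X i (ω i)|} := fun ω hω ↦ by
    rw [Set.mem_ofPred_eq, h_sum, abs_mul, abs_neg, abs_of_pos hk]
    exact mul_le_mul_of_nonneg_left hω.le hk.le
  calc Measure.pi ν {ω | t < |p - #{i ∈ s | ω i ∈ A} / #s|}
      ≤ Measure.pi ν {ω | #s * t ≤ |∑ i ∈ s, X i (ω i)|} := measure_mono h_event
    _ = ENNReal.ofReal ((Measure.pi ν).real {ω | #s * t ≤ |∑ i ∈ s, X i (ω i)|}) :=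
        (ofReal_measureReal).symm
    _ ≤ ENNReal.ofReal (2 * exp (-2 * #s * t ^ 2)) := by
        refine ENNReal.ofReal_le_ofReal ?_
        convert measure_abs_sum_ge_le_of_iIndepFun h_indep h_subG (ε := #s * t)
          (by positivity) using 3
        simp only [Finset.sum_const, nsmul_eq_mul]
        push_cast
        field_simp
        ring

end Hoeffding

lemma MeasureTheory.Measure.restrict_pi_pi_eq_smul_pi_cond {ι Ω : Type*} [Fintype ι]
    [MeasurableSpace Ω] (μ : ι → Measure Ω) [∀ i, IsFiniteMeasure (μ i)]
    {F : ι → Set Ω} (hF : ∀ i, MeasurableSet (F i)) :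
    (Measure.pi μ).restrict (Set.univ.pi F)
      = (∏ i, μ i (F i)) • Measure.pi fun i ↦ (μ i)[|F i] := by
  rw [Measure.restrict_pi_pi]
  refine Measure.pi_eq fun s _ ↦ ?_
  rw [Measure.smul_apply, Measure.pi_pi, smul_eq_mul, ← Finset.prod_mul_distrib]
  refine Finset.prod_congr rfl fun i _ ↦ ?_
  rw [mul_comm, cond_mul_eq_inter (hF i), Measure.restrict_apply' (hF i), Set.inter_comm]

lemma measureReal_cond_eq_div {Ω : Type*} [MeasurableSpace Ω] (μ : Measure Ω) {E : Set Ω}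
    (hE : MeasurableSet E) (A : Set Ω) : (μ[|E]).real A = μ.real (A ∩ E) / μ.real E := by
  rw [measureReal_def, cond_apply hE, ENNReal.toReal_mul, ENNReal.toReal_inv, Set.inter_comm,
    div_eq_inv_mul]
  rfl

lemma le_two_mul_mul_sqrt_div_sq {k : ℝ} (hk : 0 < k) (c : ℝ) :
    c ≤ 2 * k * √(c / (2 * k)) ^ 2 := by
  rw [Real.sq_sqrt']
  rcases le_total c 0 with hc | hc
  · exact hc.trans (by positivity)
  · rw [max_eq_left (by positivity)]
    exact (mul_div_cancel₀ c (by positivity)).ge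

section LabelPatterns

open scoped Classical

variable {ι Ω : Type*}

def memPattern (E : Set Ω) (b : ι → Bool) : Set (ι → Ω) :=
  Set.univ.pi fun i ↦ if b i then E else Eᶜ

lemma mem_memPattern_decide (E : Set Ω) (ω : ι → Ω) :
    ω ∈ memPattern E (fun i ↦ decide (ω i ∈ E)) := by
  intro i _
  by_cases h : ω i ∈ E <;> simp [h]

variable [Fintype ι]

noncomputable def sampleCount (E : Set Ω) (ω : ι → Ω) : ℕ := #{i | ω i ∈ E}

lemma sampleCount_inter_of_mem_memPattern {E : Set Ω} {b : ι → Bool} {ω : ι → Ω}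
    (hω : ω ∈ memPattern E b) (A : Set Ω) :
    sampleCount (E ∩ A) ω = #{i ∈ {i | b i} | ω i ∈ A} := by
  rw [sampleCount, Finset.filter_filter]
  congr! 2 with i
  have : ω i ∈ if b i then E else Eᶜ := hω i (Set.mem_univ i)
  split_ifs at this <;> simp_all

lemma sampleCount_of_mem_memPattern {E : Set Ω} {b : ι → Bool} {ω : ι → Ω}
    (hω : ω ∈ memPattern E b) : sampleCount E ω = #{i | b i} := by
  simpa using sampleCount_inter_of_mem_memPattern hω Set.univ

variable [MeasurableSpace Ω]

lemma sum_measure_pi_memPattern (μ : Measure Ω) [IsProbabilityMeasure μ] {E : Set Ω}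
    (hE : MeasurableSet E) :
    ∑ b : ι → Bool, Measure.pi (fun _ ↦ μ) (memPattern E b) = 1 := by
  simp only [memPattern, Measure.pi_pi]
  rw [← Fintype.prod_sum (fun (_ : ι) (x : Bool) ↦ μ (if x then E else Eᶜ))]
  simp [prob_add_prob_compl hE]

lemma measure_pi_le_of_forall_memPattern (μ : Measure Ω) [IsProbabilityMeasure μ] {E : Set Ω}
    (hE : MeasurableSet E) {B : Set (ι → Ω)} {C : ℝ≥0∞}
    (hB : ∀ b, Measure.pi (fun _ ↦ μ) (B ∩ memPattern E b)
      ≤ C * Measure.pi (fun _ ↦ μ) (memPattern E b)) :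
    Measure.pi (fun _ ↦ μ) B ≤ C :=
  calc Measure.pi (fun _ ↦ μ) B
      ≤ Measure.pi (fun _ ↦ μ) (⋃ b, B ∩ memPattern E b) :=
        measure_mono fun ω hω ↦ Set.mem_iUnion.mpr ⟨_, hω, mem_memPattern_decide E ω⟩
    _ ≤ ∑ b, Measure.pi (fun _ ↦ μ) (B ∩ memPattern E b) := measure_iUnion_fintype_le _ _
    _ ≤ ∑ b, C * Measure.pi (fun _ ↦ μ) (memPattern E b) :=
        Finset.sum_le_sum fun b _ ↦ hB b
    _ = C := by rw [← Finset.mul_sum, sum_measure_pi_memPattern μ hE, mul_one]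

lemma measure_pi_inter_memPattern_le (μ : Measure Ω) [IsProbabilityMeasure μ] {E A : Set Ω}
    (hE : MeasurableSet E) (hA : MeasurableSet A) {b : ι → Bool} (hb : ∃ i, b i)
    {t : ℝ} (ht : 0 ≤ t) :
    Measure.pi (fun _ ↦ μ) ({ω | t < |μ.real (A ∩ E) / μ.real E
        - #{i ∈ {i | b i} | ω i ∈ A} / #{i | b i}|} ∩ memPattern E b)
      ≤ ENNReal.ofReal (2 * exp (-2 * #{i | b i} * t ^ 2))
        * Measure.pi (fun _ ↦ μ) (memPattern E b) := by
  set F : ι → Set Ω := fun i ↦ if b i then E else Eᶜ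
  have hF (i : ι) : MeasurableSet (F i) := by by_cases hb : b i <;> simp [F, hb, hE, hE.compl]
  rw [show memPattern E b = Set.univ.pi F from rfl, ← Measure.restrict_apply' (.univ_pi hF),
    Measure.restrict_pi_pi_eq_smul_pi_cond _ hF, Measure.smul_apply, smul_eq_mul,
    Measure.pi_pi, mul_comm (ENNReal.ofReal _)]
  by_cases h_null : ∃ i, μ (F i) = 0
  · obtain ⟨i, hi⟩ := h_null
    simp [Finset.prod_eq_zero (f := fun i ↦ μ (F i)) (Finset.mem_univ i) hi]
  have (i : ι) : IsProbabilityMeasure μ[|F i] :=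
    cond_isProbabilityMeasure (not_exists.mp h_null i)
  have hp (i : ι) (hi : i ∈ ({i | b i} : Finset ι)) :
      (μ[|F i]).real A = μ.real (A ∩ E) / μ.real E := by
    simp only [F, (Finset.mem_filter.mp hi).2, if_true]
    exact measureReal_cond_eq_div μ hE A
  obtain ⟨j, hj⟩ := hb
  gcongr
  exact measure_pi_lt_abs_sub_card_filter_div_le _ hA ⟨j, by simpa using hj⟩ hp ht

lemma measure_pi_sampleCount_deviation_le (μ : Measure Ω) [IsProbabilityMeasure μ]
    {E A : Set Ω} (hE : MeasurableSet E) (hA : MeasurableSet A) (c : ℝ) :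
    Measure.pi (fun _ : ι ↦ μ) {ω | 0 < sampleCount E ω ∧ √(c / (2 * sampleCount E ω)) <
        |μ.real (A ∩ E) / μ.real E - sampleCount (E ∩ A) ω / sampleCount E ω|}
      ≤ ENNReal.ofReal (2 * exp (-c)) := by
  refine measure_pi_le_of_forall_memPattern μ hE fun b ↦ ?_
  by_cases hb : ∃ i, b i
  · have ht := Real.sqrt_nonneg (c / (2 * #{i | b i}))
    refine le_trans (measure_mono fun ω hω ↦ ?_)
      ((measure_pi_inter_memPattern_le μ hE hA hb ht).trans ?_)
    · obtain ⟨⟨-, hω⟩, hωb⟩ := hω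
      rw [sampleCount_inter_of_mem_memPattern hωb, sampleCount_of_mem_memPattern hωb] at hω
      exact ⟨hω, hωb⟩
    · have hk : (0 : ℝ) < #{i | b i} := by
        obtain ⟨i, hi⟩ := hb
        exact_mod_cast Finset.card_pos.mpr ⟨i, by simpa using hi⟩
      gcongr
      linarith [le_two_mul_mul_sqrt_div_sq hk c]
  · refine (measure_mono_null (t := ∅) (fun ω hω ↦ ?_) measure_empty).trans_le zero_le
    obtain ⟨⟨hpos, -⟩, hωb⟩ := hω
    rw [sampleCount_of_mem_memPattern hωb] at hpos
    obtain ⟨i, hi⟩ := Finset.card_pos.mp hpos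
    exact hb ⟨i, (Finset.mem_filter.mp hi).2⟩

end LabelPatterns

lemma edistE_ofReal {a b : ℝ} (ha : 0 ≤ a) (hb : 0 ≤ b) :
    edistE (ENNReal.ofReal a) (ENNReal.ofReal b) = ENNReal.ofReal |a - b| := by
  rw [edistE, ← ENNReal.ofReal_sub a hb, ← ENNReal.ofReal_sub b ha,
    ← ENNReal.ofReal_max, abs_eq_max_neg, neg_sub]

lemma edistE_le_one {a b : ℝ≥0∞} (ha : a ≤ 1) (hb : b ≤ 1) : edistE a b ≤ 1 :=
  sup_le (tsub_le_self.trans ha) (tsub_le_self.trans hb)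

lemma edistE_le_of_abs_toReal_sub_le {q : ℝ≥0∞} (hq : q ≤ 1) (j k : ℕ) {r : ℝ}
    (h : 0 < k → |q.toReal - j / k| ≤ r) :
    edistE q (if 0 < k then (j : ℝ≥0∞) / k else 0)
      ≤ if 0 < k then ENNReal.ofReal r else 1 := by
  split_ifs with hk
  · have hk' : (0 : ℝ) < k := by exact_mod_cast hk
    rw [← ENNReal.ofReal_toReal (ne_top_of_le_ne_top ENNReal.one_ne_top hq),
      ← ENNReal.ofReal_natCast j, ← ENNReal.ofReal_natCast k, ← ENNReal.ofReal_div_of_pos hk',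
      edistE_ofReal ENNReal.toReal_nonneg (by positivity)]
    exact ENNReal.ofReal_le_ofReal (h hk)
  · exact edistE_le_one hq zero_le_one

lemma two_mul_exp_neg_add_log_div (c : ℝ) {δ : ℝ} (hδ : 0 < δ) :
    2 * exp (-(c * Real.log 2 + Real.log (2 / δ))) = δ * 2 ^ (-c) := by
  rw [neg_add, exp_add, exp_neg (Real.log _), exp_log (by positivity),
    Real.rpow_def_of_pos two_pos]
  field_simp

lemma measure_pi_not_edistE_le_penNP {ι Ω : Type*} [Fintype ι] [MeasurableSpace Ω]
    (μ : Measure Ω) [IsProbabilityMeasure μ] {E A : Set Ω} (hE : MeasurableSet E)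
    (hA : MeasurableSet A) (c : ℝ) {δ : ℝ} (hδ : 0 < δ) :
    Measure.pi (fun _ : ι ↦ μ) {ω | ¬ edistE (μ (A ∩ E) / μ E)
        (if 0 < sampleCount E ω then (sampleCount (E ∩ A) ω : ℝ≥0∞) / sampleCount E ω
          else 0) ≤ penNP c δ (sampleCount E ω)}
      ≤ ENNReal.ofReal δ * 2 ^ (-c) := by
  have h_ratio : μ (A ∩ E) / μ E ≤ 1 :=
    ENNReal.div_le_of_le_mul (by rw [one_mul]; exact measure_mono Set.inter_subset_right)
  calc _ ≤ Measure.pi (fun _ : ι ↦ μ) {ω | 0 < sampleCount E ω ∧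
          √((c * Real.log 2 + Real.log (2 / δ)) / (2 * sampleCount E ω)) <
          |μ.real (A ∩ E) / μ.real E - sampleCount (E ∩ A) ω / sampleCount E ω|} := by
        refine measure_mono fun ω hω ↦ ?_
        by_contra h_core
        refine hω (edistE_le_of_abs_toReal_sub_le h_ratio _ _ fun hk ↦ ?_)
        rw [ENNReal.toReal_div]
        exact not_lt.mp (not_and.mp h_core hk)
    _ ≤ ENNReal.ofReal (2 * exp (-(c * Real.log 2 + Real.log (2 / δ)))) :=
        measure_pi_sampleCount_deviation_le μ hE hA _
    _ = ENNReal.ofReal δ * 2 ^ (-c) := by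
        rw [two_mul_exp_neg_add_log_div c hδ, ENNReal.ofReal_mul hδ.le,
          ← ENNReal.ofReal_rpow_of_pos two_pos, ENNReal.ofReal_ofNat]

lemma le_measure_setOf_forall_of_tsum_le {Ω κ : Type*} [MeasurableSpace Ω] (μ : Measure Ω)
    [IsProbabilityMeasure μ] {H : Set κ} (hH : H.Countable) {w : κ → ℝ≥0∞}
    (hw : ∑' h : H, w h ≤ 1) (ε : ℝ≥0∞) (Good : κ → Ω → Prop)
    (h_bad : ∀ h ∈ H, μ {ω | ¬ Good h ω} ≤ ε * w h) :
    1 - ε ≤ μ {ω | ∀ h ∈ H, Good h ω} := by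
  have h_union : μ (⋃ h ∈ H, {ω | ¬ Good h ω}) ≤ ε :=
    calc μ (⋃ h ∈ H, {ω | ¬ Good h ω})
        ≤ ∑' h : H, μ {ω | ¬ Good h ω} := measure_biUnion_le μ hH _
      _ ≤ ∑' h : H, ε * w h := ENNReal.tsum_le_tsum fun h ↦ h_bad h h.2
      _ ≤ ε := by rw [ENNReal.tsum_mul_left]; exact mul_le_of_le_one_right' hw
  have h_cover :
      1 ≤ μ {ω | ∀ h ∈ H, Good h ω} + μ (⋃ h ∈ H, {ω | ¬ Good h ω}) := by
    rw [← measure_univ (μ := μ)]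
    refine (measure_mono fun ω _ ↦ ?_).trans (measure_union_le _ _)
    by_cases hω : ∀ h ∈ H, Good h ω
    · exact .inl hω
    · push Not at hω
      obtain ⟨h, hH, hh⟩ := hω
      exact .inr (Set.mem_biUnion hH hh)
  exact tsub_le_iff_right.mpr (h_cover.trans (by gcongr))

section SampleCounts

variable {𝓧 : Type*} {n : ℕ} (ω : Fin n → 𝓧 × Bool)

lemma nneg_eq_sampleCount : nneg ω = sampleCount {z : 𝓧 × Bool | z.2 = false} ω := by
  simp only [nneg, sampleCount]
  congr

lemma npos_eq_sampleCount : npos ω = sampleCount {z : 𝓧 × Bool | z.2 = true} ω := by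
  simp only [npos, sampleCount]
  congr

lemma RhatFP_eq_sampleCount (h : 𝓧 → Bool) :
    RhatFP h ω = if 0 < sampleCount {z : 𝓧 × Bool | z.2 = false} ω then
      (sampleCount ({z | z.2 = false} ∩ {z | h z.1 = true}) ω : ℝ≥0∞)
        / sampleCount {z : 𝓧 × Bool | z.2 = false} ω else 0 := by
  simp only [RhatFP, nneg, sampleCount]
  congr

lemma RhatFN_eq_sampleCount (h : 𝓧 → Bool) :
    RhatFN h ω = if 0 < sampleCount {z : 𝓧 × Bool | z.2 = true} ω then
      (sampleCount ({z | z.2 = true} ∩ {z | h z.1 = false}) ω : ℝ≥0∞)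
        / sampleCount {z : 𝓧 × Bool | z.2 = true} ω else 0 := by
  simp only [RhatFN, npos, sampleCount]
  congr

end SampleCounts

theorem np_uniform_deviation_bounds_general
    {𝓧 : Type*} [MeasurableSpace 𝓧] (P : Measure (𝓧 × Bool)) [IsProbabilityMeasure P]
    (H : Set (𝓧 → Bool)) (hHcount : H.Countable) (hHmeas : ∀ h ∈ H, Measurable h)
    (cl : (𝓧 → Bool) → ℝ)
    (hKraft : ∑' h : H, (2 : ℝ≥0∞) ^ (-(cl h.1)) ≤ 1)
    (n : ℕ) (δ : ℝ) (hδ0 : 0 < δ) :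
    ENNReal.ofReal (1 - δ) ≤
      (Measure.pi fun _ : Fin n => P)
        {ω | ∀ h ∈ H, edistE (RFP P h) (RhatFP h ω) ≤ penNP (cl h) δ (nneg ω)} ∧
    ENNReal.ofReal (1 - δ) ≤
      (Measure.pi fun _ : Fin n => P)
        {ω | ∀ h ∈ H, edistE (RFN P h) (RhatFN h ω) ≤ penNP (cl h) δ (npos ω)} := by
  have hE (y : Bool) : MeasurableSet {z : 𝓧 × Bool | z.2 = y} :=
    measurable_snd (measurableSet_singleton y)
  have hA {h : 𝓧 → Bool} (hh : h ∈ H) (y : Bool) :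
      MeasurableSet {z : 𝓧 × Bool | h z.1 = y} :=
    ((hHmeas h hh).comp measurable_fst) (measurableSet_singleton y)
  rw [ENNReal.ofReal_sub _ hδ0.le, ENNReal.ofReal_one]
  constructor
  · refine le_measure_setOf_forall_of_tsum_le _ hHcount (w := fun h ↦ 2 ^ (-cl h)) hKraft _ _
      fun h hh ↦ ?_
    simp only [RhatFP_eq_sampleCount, nneg_eq_sampleCount]
    exact measure_pi_not_edistE_le_penNP P (hE false) (hA hh true) (cl h) hδ0
  · refine le_measure_setOf_forall_of_tsum_le _ hHcount (w := fun h ↦ 2 ^ (-cl h)) hKraft _ _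
      fun h hh ↦ ?_
    simp only [RhatFN_eq_sampleCount, npos_eq_sampleCount]
    exact measure_pi_not_edistE_le_penNP P (hE true) (hA hh false) (cl h) hδ0

/-- **Uniform deviation bounds for false positive and false negative rates.** For a
countable class `H` with codelengths satisfying the Kraft inequality, with probability at
least `1 - δ` over the i.i.d. training sample every `h ∈ H` satisfies
`|R_FP(h) - R̂_FP(h)| ≤ φ_FP(h, δ)`; likewise, with probability at least `1 - δ`, every
`h ∈ H` satisfies `|R_FN(h) - R̂_FN(h)| ≤ φ_FN(h, δ)`.  This holds for every `n ≥ 1`,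
every `0 < δ < 1` and every distribution `P`. -/
theorem np_uniform_deviation_bounds
    {𝓧 : Type*} [MeasurableSpace 𝓧] (P : Measure (𝓧 × Bool)) [IsProbabilityMeasure P]
    (H : Set (𝓧 → Bool)) (hHcount : H.Countable) (hHmeas : ∀ h ∈ H, Measurable h)
    (cl : (𝓧 → Bool) → ℝ)
    (hKraft : ∑' h : H, (2 : ℝ≥0∞) ^ (-(cl h.1)) ≤ 1)
    (n : ℕ) (hn : 1 ≤ n) (δ : ℝ) (hδ0 : 0 < δ) (hδ1 : δ < 1) :
    ENNReal.ofReal (1 - δ) ≤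
      (Measure.pi fun _ : Fin n => P)
        {ω | ∀ h ∈ H, edistE (RFP P h) (RhatFP h ω) ≤ penNP (cl h) δ (nneg ω)} ∧
    ENNReal.ofReal (1 - δ) ≤
      (Measure.pi fun _ : Fin n => P)
        {ω | ∀ h ∈ H, edistE (RFN P h) (RhatFN h ω) ≤ penNP (cl h) δ (npos ω)} :=
  np_uniform_deviation_bounds_general P H hHcount hHmeas cl hKraft n δ hδ0
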